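/- arXiv:2301.07638 — 10 statements merged into one kernel-verified Lean document; each statement's English description precedes it below -/
import Mathlib

section
/- Let G : ℝ → ℝ be continuous with 0 < G(v) < 1 and G(v) = 1 − G(−v) for all v, let q(w) = G(w)/(1 − G(w)), let g : ℝ → ℝ be continuous, even, and nonnegative, and let k > 0. Define φ(v) = k − ∫₀^v q(w)^{−1/2}·g(w) dw. Then φ is differentiable with φ′(v) = −q(v)^{−1/2}·g(v), φ is non-increasing on ℝ, and φ is conformable to G, i.e. φ′(−v)·(1 − G(v)) = φ′(v)·G(v) for all v ∈ ℝ. -/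
open MeasureTheory intervalIntegral

/-! Since `φ` is `k` minus the integral of a continuous nonnegative function, the fundamental
theorem of calculus gives `φ'` and monotonicity. Conformability is pointwise algebra: symmetry of
`G` makes `q (-v) = (q v)⁻¹`, and `g` is even, so the identity reduces to `√q · (1 - G) = G / √q`,
i.e. to `q · (1 - G) = G`. -/

lemma odds_pos {a : ℝ} (h0 : 0 < a) (h1 : a < 1) : 0 < a / (1 - a) :=
  div_pos h0 (sub_pos.2 h1)

lemma odds_one_sub (a : ℝ) : (1 - a) / (1 - (1 - a)) = (a / (1 - a))⁻¹ := by
  rw [sub_sub_cancel, inv_div]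

lemma inv_sqrt_odds_one_sub_mul {a : ℝ} (h0 : 0 < a) (h1 : a < 1) :
    (√((1 - a) / (1 - (1 - a))))⁻¹ * (1 - a) = (√(a / (1 - a)))⁻¹ * a := by
  have hs : 0 < √(a / (1 - a)) := Real.sqrt_pos.2 (odds_pos h0 h1)
  have hss : √(a / (1 - a)) * √(a / (1 - a)) = a / (1 - a) :=
    Real.mul_self_sqrt (odds_pos h0 h1).le
  have hb : 1 - a ≠ 0 := (sub_pos.2 h1).ne'
  rw [odds_one_sub, Real.sqrt_inv, inv_inv, eq_inv_mul_iff_mul_eq₀ hs.ne', ← mul_assoc, hss,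
    div_mul_cancel₀ a hb]

theorem stmt_1_general (G g : ℝ → ℝ) (k : ℝ)
    (hGcont : Continuous G)
    (hG01 : ∀ v, 0 < G v ∧ G v < 1)
    (hGsym : ∀ v, G v = 1 - G (-v))
    (hgcont : Continuous g) (hgeven : ∀ w, g (-w) = g w) (hgnn : ∀ w, 0 ≤ g w) :
    let q : ℝ → ℝ := fun w => G w / (1 - G w)
    let φ : ℝ → ℝ := fun v => k - ∫ w in (0:ℝ)..v, (Real.sqrt (q w))⁻¹ * g w
    (∀ v, HasDerivAt φ (-((Real.sqrt (q v))⁻¹ * g v)) v) ∧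
    Antitone φ ∧
    (∀ v, deriv φ (-v) * (1 - G v) = deriv φ v * G v) := by
  intro q φ
  have hG_neg (v : ℝ) : G (-v) = 1 - G v := by linarith [hGsym v]
  have hq_pos (v : ℝ) : 0 < q v := odds_pos (hG01 v).1 (hG01 v).2
  have hq_cont : Continuous q :=
    hGcont.div (continuous_const.sub hGcont) fun v => (sub_pos.2 (hG01 v).2).ne'
  have hf_cont : Continuous fun w => (√(q w))⁻¹ * g w :=
    (hq_cont.sqrt.inv₀ fun w => (Real.sqrt_pos.2 (hq_pos w)).ne').mul hgcont
  have hφ (v : ℝ) : HasDerivAt φ (-((√(q v))⁻¹ * g v)) v :=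
    (hf_cont.integral_hasStrictDerivAt 0 v).hasDerivAt.const_sub k
  refine ⟨hφ, antitone_of_hasDerivAt_nonpos hφ fun v => ?_, fun v => ?_⟩
  · exact neg_nonpos.2 (mul_nonneg (inv_nonneg.2 (Real.sqrt_nonneg _)) (hgnn v))
  · rw [(hφ v).deriv, (hφ (-v)).deriv, hgeven]
    simp only [q, hG_neg]
    linear_combination (-g v) * inv_sqrt_odds_one_sub_mul (hG01 v).1 (hG01 v).2

/-- a loss `φ v = k - ∫₀^v q(w)^{-1/2} g(w) dw` built from a symmetric
CDF `G` (odds `q = G/(1-G)`) and a continuous, even, nonnegative weight `g` is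
differentiable with `φ' v = -q(v)^{-1/2} g(v)`, is non-increasing, and is
conformable to `G`: `φ'(-v)·(1 - G v) = φ'(v)·G v` for all `v`. -/
theorem stmt_1 (G g : ℝ → ℝ) (k : ℝ)
    (hGcont : Continuous G)
    (hG01 : ∀ v, 0 < G v ∧ G v < 1)
    (hGsym : ∀ v, G v = 1 - G (-v))
    (hgcont : Continuous g) (hgeven : ∀ w, g (-w) = g w) (hgnn : ∀ w, 0 ≤ g w)
    (hk : 0 < k) :
    let q : ℝ → ℝ := fun w => G w / (1 - G w)
    let φ : ℝ → ℝ := fun v => k - ∫ w in (0:ℝ)..v, (Real.sqrt (q w))⁻¹ * g w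
    (∀ v, HasDerivAt φ (-((Real.sqrt (q v))⁻¹ * g v)) v) ∧
    Antitone φ ∧
    (∀ v, deriv φ (-v) * (1 - G v) = deriv φ v * G v) :=
  stmt_1_general G g k hGcont hG01 hGsym hgcont hgeven hgnn
end

section
/- Let G : ℝ → ℝ be continuous with 0 < G(v) < 1 and G(v) = 1 − G(−v) for all v, and let q(w) = G(w)/(1 − G(w)). Suppose φ : ℝ → ℝ is non-increasing, differentiable with continuous derivative, and conformable to G, i.e. φ′(−v)·(1 − G(v)) = φ′(v)·G(v) for all v. Then there exists a continuous, even, nonnegative function g : ℝ → ℝ such that φ′(v) = −q(v)^{−1/2}·g(v) for all v, and consequently φ(v) = φ(0) − ∫₀^v q(w)^{−1/2}·g(w) dw for all v ∈ ℝ. -/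
open MeasureTheory intervalIntegral

/-! Conformability says `φ'(-v) = φ'(v) q(v)`, and symmetry of `G` says `q(-v) = q(v)⁻¹`.
Hence `g := -φ' · √q` is even: `-φ'(-v) √q(-v) = -φ'(v) q(v) / √q(v) = -φ'(v) √q(v)`.
It is nonnegative because `φ` is non-increasing, and the integral formula is the fundamental
theorem of calculus for `φ`. -/

noncomputable def odds (G : ℝ → ℝ) (w : ℝ) : ℝ := G w / (1 - G w)

lemma odds_pos_s2 {G : ℝ → ℝ} {w : ℝ} (hG : 0 < G w ∧ G w < 1) : 0 < odds G w :=
  div_pos hG.1 (sub_pos.2 hG.2)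

lemma continuous_odds {G : ℝ → ℝ} (hG : Continuous G) (hG1 : ∀ w, G w < 1) :
    Continuous (odds G) :=
  hG.div (continuous_const.sub hG) fun w => (sub_pos.2 (hG1 w)).ne'

lemma odds_neg {G : ℝ → ℝ} (hGsym : ∀ v, G v = 1 - G (-v)) (w : ℝ) :
    odds G (-w) = (odds G w)⁻¹ := by
  have hGneg : G (-w) = 1 - G w := by linarith [hGsym w]
  rw [odds, odds, hGneg, sub_sub_cancel, inv_div]

lemma deriv_neg_eq_mul_odds {G φ : ℝ → ℝ} {w : ℝ} (hGw : G w < 1)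
    (hconf : deriv φ (-w) * (1 - G w) = deriv φ w * G w) :
    deriv φ (-w) = deriv φ w * odds G w := by
  rw [odds, ← mul_div_assoc, eq_div_iff (sub_pos.2 hGw).ne']
  exact hconf

lemma mul_sqrt_neg_eq {f q : ℝ → ℝ} {w : ℝ} (hqneg : q (-w) = (q w)⁻¹)
    (hf : f (-w) = f w * q w) :
    f (-w) * √(q (-w)) = f w * √(q w) := by
  rw [hf, hqneg, Real.sqrt_inv, mul_assoc, ← div_eq_mul_inv, Real.div_sqrt]

/-- conversely, any non-increasing, continuously differentiable loss `φ`
conformable to a symmetric CDF `G` has derivative `φ' v = -q(v)^{-1/2} g(v)` for a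
continuous, even, nonnegative weight `g`, and hence
`φ v = φ 0 - ∫₀^v q(w)^{-1/2} g(w) dw`. -/
theorem stmt_2 (G φ : ℝ → ℝ)
    (hGcont : Continuous G)
    (hG01 : ∀ v, 0 < G v ∧ G v < 1)
    (hGsym : ∀ v, G v = 1 - G (-v))
    (hφdiff : Differentiable ℝ φ)
    (hφ'cont : Continuous (deriv φ))
    (hφanti : Antitone φ)
    (hconf : ∀ v, deriv φ (-v) * (1 - G v) = deriv φ v * G v) :
    ∃ g : ℝ → ℝ, Continuous g ∧ (∀ w, g (-w) = g w) ∧ (∀ w, 0 ≤ g w) ∧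
      (∀ v, deriv φ v = -((Real.sqrt (G v / (1 - G v)))⁻¹ * g v)) ∧
      (∀ v, φ v = φ 0 - ∫ w in (0:ℝ)..v, (Real.sqrt (G w / (1 - G w)))⁻¹ * g w) := by
  have hsqrt : ∀ w, 0 < √(odds G w) := fun w => Real.sqrt_pos.2 (odds_pos_s2 (hG01 w))
  have hcancel : ∀ w, (√(odds G w))⁻¹ * (-deriv φ w * √(odds G w)) = -deriv φ w := fun w => by
    field_simp [(hsqrt w).ne']
  refine ⟨fun w => -deriv φ w * √(odds G w), ?_, fun w => ?_, fun w => ?_, fun v => ?_, fun v => ?_⟩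
  · exact hφ'cont.neg.mul
      (Real.continuous_sqrt.comp (continuous_odds hGcont fun w => (hG01 w).2))
  · simpa only [neg_mul, neg_inj] using mul_sqrt_neg_eq (odds_neg hGsym w)
      (deriv_neg_eq_mul_odds (hG01 w).2 (hconf w))
  · exact mul_nonneg (neg_nonneg.2 hφanti.deriv_nonpos) (hsqrt w).le
  · show deriv φ v = -((√(odds G v))⁻¹ * (-deriv φ v * √(odds G v)))
    rw [hcancel, neg_neg]
  · show φ v = φ 0 - ∫ w in (0:ℝ)..v, (√(odds G w))⁻¹ * (-deriv φ w * √(odds G w))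
    rw [integral_congr fun w _ => hcancel w, intervalIntegral.integral_neg,
      integral_deriv_eq_sub (fun x _ => hφdiff x) hφ'cont.continuousOn.intervalIntegrable]
    ring
end

section
/- Let G : ℝ → ℝ be differentiable with 0 < G(v) < 1 and G(v) = 1 − G(−v) for all v, let q(w) = G(w)/(1 − G(w)), and let g : ℝ → ℝ be differentiable, even, and strictly positive. Let φ : ℝ → ℝ be differentiable with φ′(v) = −q(v)^{−1/2}·g(v) for all v. Then φ is convex on ℝ if and only if g′(v)/g(v) ≤ (1/2)·q′(v)/q(v) for all v ∈ ℝ (i.e. (d/dv) log g(v) ≤ (1/2)(d/dv) log q(v)). -/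
/-! Since `φ' = -q^{-1/2} g`, a direct computation gives
`φ'' = q^{-1/2} g · (½ (log q)' - (log g)')`. The prefactor is positive, and a differentiable
function on `ℝ` is convex iff its derivative is monotone, iff its second derivative is
nonnegative. -/

open Set

lemma convexOn_univ_iff_monotone_of_hasDerivAt {f f' : ℝ → ℝ}
    (hf : ∀ x, HasDerivAt f (f' x) x) : ConvexOn ℝ univ f ↔ Monotone f' := by
  have hderiv : deriv f = f' := funext fun x => (hf x).deriv
  have hdiff : Differentiable ℝ f := fun x => (hf x).differentiableAt
  constructor
  · intro hconv a b hab
    rw [← hderiv]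
    exact hconv.monotoneOn_deriv (fun x _ => hdiff x) (mem_univ a) (mem_univ b) hab
  · intro hmono
    refine MonotoneOn.convexOn_of_deriv convex_univ hdiff.continuous.continuousOn
      hdiff.differentiableOn ?_
    rw [hderiv]
    exact hmono.monotoneOn _

lemma convexOn_univ_iff_forall_nonneg_of_hasDerivAt {f f' f'' : ℝ → ℝ}
    (hf : ∀ x, HasDerivAt f (f' x) x) (hf' : ∀ x, HasDerivAt f' (f'' x) x) :
    ConvexOn ℝ univ f ↔ ∀ x, 0 ≤ f'' x := by
  rw [convexOn_univ_iff_monotone_of_hasDerivAt hf]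
  refine ⟨fun hmono x => (hf' x).nonneg_of_monotone hmono, fun h => ?_⟩
  exact monotone_of_deriv_nonneg (fun x => (hf' x).differentiableAt)
    fun x => (hf' x).deriv ▸ h x

lemma hasDerivAt_neg_inv_sqrt_mul {q g : ℝ → ℝ} {q' g' v : ℝ} (hq : HasDerivAt q q' v)
    (hg : HasDerivAt g g' v) (hqv : 0 < q v) (hgv : g v ≠ 0) :
    HasDerivAt (fun w => -((√(q w))⁻¹ * g w))
      ((√(q v))⁻¹ * g v * (1 / 2 * (q' / q v) - g' / g v)) v := by
  have hs : 0 < √(q v) := Real.sqrt_pos.2 hqv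
  refine (((hq.sqrt hqv.ne').inv hs.ne').mul hg).neg.congr_deriv ?_
  have hsq : √(q v) ^ 2 = q v := Real.sq_sqrt hqv.le
  simp only [Pi.inv_apply]
  field_simp
  rw [hsq]
  ring

lemma odds_pos_s4 {p : ℝ} (hp : 0 < p ∧ p < 1) : 0 < p / (1 - p) :=
  div_pos hp.1 (sub_pos.2 hp.2)

theorem stmt_4_general (G g φ : ℝ → ℝ)
    (hGdiff : Differentiable ℝ G)
    (hG01 : ∀ v, 0 < G v ∧ G v < 1)
    (hgdiff : Differentiable ℝ g)
    (hgpos : ∀ w, 0 < g w)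
    (hφ : ∀ v, HasDerivAt φ (-((Real.sqrt (G v / (1 - G v)))⁻¹ * g v)) v) :
    ConvexOn ℝ Set.univ φ ↔
      ∀ v, deriv g v / g v ≤
        (1 / 2) * (deriv (fun w => G w / (1 - G w)) v / (G v / (1 - G v))) := by
  have hq_diff : Differentiable ℝ fun w => G w / (1 - G w) :=
    hGdiff.div ((differentiable_const 1).sub hGdiff) fun v => (sub_pos.2 (hG01 v).2).ne'
  rw [convexOn_univ_iff_forall_nonneg_of_hasDerivAt hφ fun v => hasDerivAt_neg_inv_sqrt_mul
    (hq_diff v).hasDerivAt (hgdiff v).hasDerivAt (odds_pos_s4 (hG01 v)) (hgpos v).ne']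
  refine forall_congr' fun v => ?_
  have hprefactor : 0 < (√(G v / (1 - G v)))⁻¹ * g v :=
    mul_pos (inv_pos.2 (Real.sqrt_pos.2 (odds_pos_s4 (hG01 v)))) (hgpos v)
  rw [mul_nonneg_iff_of_pos_left hprefactor, sub_nonneg]

/-- for `φ` in the class `L_G` (i.e. `φ' v = -q(v)^{-1/2} g(v)` with `g`
differentiable, even, strictly positive, and `q = G/(1-G)` the odds of a
differentiable symmetric CDF `G`), `φ` is convex on ℝ if and only if
`(d/dv) log g(v) ≤ (1/2)(d/dv) log q(v)`, i.e. `g'(v)/g(v) ≤ (1/2)·q'(v)/q(v)`. -/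
theorem stmt_4 (G g φ : ℝ → ℝ)
    (hGdiff : Differentiable ℝ G)
    (hG01 : ∀ v, 0 < G v ∧ G v < 1)
    (hGsym : ∀ v, G v = 1 - G (-v))
    (hgdiff : Differentiable ℝ g)
    (hgeven : ∀ w, g (-w) = g w)
    (hgpos : ∀ w, 0 < g w)
    (hφ : ∀ v, HasDerivAt φ (-((Real.sqrt (G v / (1 - G v)))⁻¹ * g v)) v) :
    ConvexOn ℝ Set.univ φ ↔
      ∀ v, deriv g v / g v ≤
        (1 / 2) * (deriv (fun w => G w / (1 - G w)) v / (G v / (1 - G v))) :=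
  stmt_4_general G g φ hGdiff hG01 hgdiff hgpos hφ
end

section
/- Let G : ℝ → ℝ be differentiable with 0 < G(v) < 1, G(v) = 1 − G(−v), and G′(v) > 0 for all v, and let q(w) = G(w)/(1 − G(w)). Suppose φ : ℝ → ℝ is differentiable with φ′(v) = −q(v)^{−1/2}·g₀(v) for all v, where g₀ is even and nonnegative. Then there exists an even nonnegative function g : ℝ → ℝ such that φ′(v) = −g(v)·G′(v)/G(v) for all v; that is, the derivative of φ is an even nonnegative weight function times the derivative (d/dv) log G(v) of the log-likelihood. -/
/-!
The factor `q(v)^{-1/2} · G(v)` equals `√(G v · (1 - G v))`, which is even because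
`G (-v) = 1 - G v`. Hence `g := g₀ · √(G (1 - G)) / G'` works: `G'` is even too, being
the derivative of `v ↦ 1 - G (-v)`.
-/

lemma deriv_even_of_eq_const_sub_comp_neg {𝕜 F : Type*} [NontriviallyNormedField 𝕜]
    [NormedAddCommGroup F] [NormedSpace 𝕜 F] {f : 𝕜 → F} (c : F)
    (hf : ∀ x, f x = c - f (-x)) : Function.Even (deriv f) := by
  intro x
  have hfun : f = fun y ↦ c - f (-y) := funext hf
  conv_rhs => rw [hfun, deriv_const_sub, deriv_comp_neg (fun y ↦ f y), neg_neg]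

lemma Real.inv_sqrt_div_mul_self (a b : ℝ) (ha : 0 ≤ a) : (√(a / b))⁻¹ * a = √(a * b) := by
  calc (√(a / b))⁻¹ * a = √(b / a) * √(a * a) := by
        rw [← Real.sqrt_inv, inv_div, Real.sqrt_mul_self ha]
    _ = √(b / a * (a * a)) := (Real.sqrt_mul' _ (mul_self_nonneg a)).symm
    _ = √(a * b) := by rw [div_mul_eq_mul_div, mul_div_assoc, mul_self_div_self, mul_comm]

theorem stmt_7_general (G g₀ φ : ℝ → ℝ)
    (hG01 : ∀ v, 0 < G v ∧ G v < 1)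
    (hGsym : ∀ v, G v = 1 - G (-v))
    (hG'pos : ∀ v, 0 < deriv G v)
    (hg₀even : ∀ w, g₀ (-w) = g₀ w) (hg₀nn : ∀ w, 0 ≤ g₀ w)
    (hφ' : ∀ v, deriv φ v = -((Real.sqrt (G v / (1 - G v)))⁻¹ * g₀ v)) :
    ∃ g : ℝ → ℝ, (∀ w, g (-w) = g w) ∧ (∀ w, 0 ≤ g w) ∧
      ∀ v, deriv φ v = -(g v * (deriv G v / G v)) := by
  have hGneg (v : ℝ) : G (-v) = 1 - G v := by linarith [hGsym v]
  have hG'even := deriv_even_of_eq_const_sub_comp_neg 1 hGsym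
  refine ⟨fun v ↦ g₀ v * √(G v * (1 - G v)) / deriv G v, fun w ↦ ?_, fun w ↦ ?_, fun v ↦ ?_⟩
  · simp only [hGneg, hG'even w, hg₀even, sub_sub_cancel, mul_comm (1 - G w)]
  · have := hg₀nn w
    have := (hG'pos w).le
    positivity
  · dsimp only
    rw [hφ', ← Real.inv_sqrt_div_mul_self _ _ (hG01 v).1.le]
    have := (hG01 v).1.ne'
    have := (hG'pos v).ne'
    field_simp

/-- if `φ' v = -q(v)^{-1/2}·g₀(v)` with `g₀` even and nonnegative,
where `q = G/(1-G)` for a differentiable symmetric CDF `G` with positive density,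
then `φ' v = -g(v)·G'(v)/G(v)` for some even nonnegative weight `g`; i.e. the
derivative of `φ` is a weighted log-likelihood score. -/
theorem stmt_7 (G g₀ φ : ℝ → ℝ)
    (hGdiff : Differentiable ℝ G)
    (hG01 : ∀ v, 0 < G v ∧ G v < 1)
    (hGsym : ∀ v, G v = 1 - G (-v))
    (hG'pos : ∀ v, 0 < deriv G v)
    (hg₀even : ∀ w, g₀ (-w) = g₀ w) (hg₀nn : ∀ w, 0 ≤ g₀ w)
    (hφdiff : Differentiable ℝ φ)
    (hφ' : ∀ v, deriv φ v = -((Real.sqrt (G v / (1 - G v)))⁻¹ * g₀ v)) :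
    ∃ g : ℝ → ℝ, (∀ w, g (-w) = g w) ∧ (∀ w, 0 ≤ g w) ∧
      ∀ v, deriv φ v = -(g v * (deriv G v / G v)) :=
  stmt_7_general G g₀ φ hG01 hGsym hG'pos hg₀even hg₀nn hφ'
end

section
/- Let G : ℝ → ℝ satisfy 0 < G(v) < 1 and G(v) = 1 − G(−v) for all v, let q(w) = G(w)/(1 − G(w)), and let φ : ℝ → ℝ be differentiable with φ′(v) = −q(v)^{−1/2}·g(v) for all v, where g is even and nonnegative. Then for every f ∈ ℝ, the estimating score is conditionally unbiased under the model Pr(y* = 1) = G(f): G(f)·φ′(f) − (1 − G(f))·φ′(−f) = 0. Equivalently, if y* is a random variable taking value 1 with probability G(f) and −1 with probability 1 − G(f), then E[y*·φ′(y*·f)] = 0. -/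
/-! With `G (-f) = 1 - G f` and `g` even, the two terms of the score are `g f` times
`p / √(p / (1 - p))` and `(1 - p) / √((1 - p) / p)` for `p = G f`; both equal `√(p (1 - p))`. -/

open Real

lemma Real.mul_inv_sqrt_div {a : ℝ} (ha : 0 ≤ a) (b : ℝ) : a * (√(a / b))⁻¹ = √(a * b) := by
  rw [sqrt_div ha, inv_div, sqrt_mul ha]
  rcases ha.eq_or_lt with rfl | ha
  · simp
  · have hsa : √a ≠ 0 := (sqrt_pos.2 ha).ne'
    field_simp
    rw [sq_sqrt ha.le, mul_comm]

lemma mul_inv_sqrt_odds_eq {p : ℝ} (hp0 : 0 ≤ p) (hp1 : p ≤ 1) :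
    p * (√(p / (1 - p)))⁻¹ = (1 - p) * (√((1 - p) / p))⁻¹ := by
  rw [Real.mul_inv_sqrt_div hp0, Real.mul_inv_sqrt_div (sub_nonneg.2 hp1), mul_comm]

theorem stmt_9_general (G g φ : ℝ → ℝ)
    (hG01 : ∀ v, 0 < G v ∧ G v < 1)
    (hGsym : ∀ v, G v = 1 - G (-v))
    (hgeven : ∀ w, g (-w) = g w)
    (hφ' : ∀ v, deriv φ v = -((Real.sqrt (G v / (1 - G v)))⁻¹ * g v)) :
    ∀ f : ℝ,
      (G f * deriv φ f - (1 - G f) * deriv φ (-f) = 0) ∧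
      (G f * ((1:ℝ) * deriv φ ((1:ℝ) * f)) +
        (1 - G f) * ((-1:ℝ) * deriv φ ((-1:ℝ) * f)) = 0) := by
  intro f
  have hGneg : G (-f) = 1 - G f := by simpa using hGsym (-f)
  have hbalance : G f * deriv φ f - (1 - G f) * deriv φ (-f) = 0 := by
    rw [hφ', hφ', hGneg, hgeven, sub_sub_cancel]
    linear_combination -g f * mul_inv_sqrt_odds_eq (hG01 f).1.le (hG01 f).2.le
  refine ⟨hbalance, ?_⟩
  simp only [one_mul, neg_one_mul]
  linear_combination hbalance

/-- for `φ ∈ L_G` (`φ' v = -q(v)^{-1/2}·g(v)`, `g` even nonnegative,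
`q = G/(1-G)` the odds of a symmetric CDF `G`), the estimating score is
conditionally unbiased under `Pr(y* = 1) = G f`:
`G f · φ'(f) - (1 - G f) · φ'(-f) = 0`, equivalently `E[y*·φ'(y*·f)] = 0`. -/
theorem stmt_9 (G g φ : ℝ → ℝ)
    (hG01 : ∀ v, 0 < G v ∧ G v < 1)
    (hGsym : ∀ v, G v = 1 - G (-v))
    (hgeven : ∀ w, g (-w) = g w) (hgnn : ∀ w, 0 ≤ g w)
    (hφdiff : Differentiable ℝ φ)
    (hφ' : ∀ v, deriv φ v = -((Real.sqrt (G v / (1 - G v)))⁻¹ * g v)) :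
    ∀ f : ℝ,
      (G f * deriv φ f - (1 - G f) * deriv φ (-f) = 0) ∧
      (G f * ((1:ℝ) * deriv φ ((1:ℝ) * f)) +
        (1 - G f) * ((-1:ℝ) * deriv φ ((-1:ℝ) * f)) = 0) :=
  stmt_9_general G g φ hG01 hGsym hgeven hφ'
end

section
/- Let G : ℝ → ℝ satisfy 0 < G(v) < 1 and G(v) = 1 − G(−v) for all v, let q(w) = G(w)/(1 − G(w)), and let φ : ℝ → ℝ be differentiable with φ′(v) = −q(v)^{−1/2}·g(v) for all v, where g is even and nonnegative. Then for every f ∈ ℝ, the conditional second moment (variance) of the estimating score under the model Pr(y* = 1) = G(f) equals the squared weight function and does not depend on G: G(f)·(φ′(f))² + (1 − G(f))·(φ′(−f))² = g(f)². -/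
/-! The odds of `y* = 1` and `y* = -1` are reciprocal, so each squared score is
`g(f)²` divided by the odds of its own outcome; weighting by the probabilities
`G f` and `1 - G f` turns both terms into complementary fractions of `g(f)²`. -/

lemma sq_inv_sqrt_mul_eq_div {x : ℝ} (hx : 0 ≤ x) (c : ℝ) :
    (-((√x)⁻¹ * c)) ^ 2 = c ^ 2 / x := by
  rw [neg_sq, mul_pow, inv_pow, Real.sq_sqrt hx, inv_mul_eq_div]

lemma second_moment_inv_sqrt_odds {p : ℝ} (h0 : 0 < p) (h1 : p < 1) (c : ℝ) :
    p * (-((√(p / (1 - p)))⁻¹ * c)) ^ 2 + (1 - p) * (-((√((1 - p) / p))⁻¹ * c)) ^ 2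
      = c ^ 2 := by
  have h1' : 0 < 1 - p := sub_pos.mpr h1
  rw [sq_inv_sqrt_mul_eq_div (by positivity), sq_inv_sqrt_mul_eq_div (by positivity)]
  field_simp
  ring

theorem stmt_11_general (G g φ : ℝ → ℝ)
    (hG01 : ∀ v, 0 < G v ∧ G v < 1)
    (hGsym : ∀ v, G v = 1 - G (-v))
    (hgeven : ∀ w, g (-w) = g w)
    (hφ' : ∀ v, deriv φ v = -((Real.sqrt (G v / (1 - G v)))⁻¹ * g v)) :
    ∀ f : ℝ, G f * (deriv φ f) ^ 2 + (1 - G f) * (deriv φ (-f)) ^ 2 = (g f) ^ 2 := by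
  intro f
  have hGneg : G (-f) = 1 - G f := by linarith [hGsym f]
  rw [hφ', hφ', hGneg, sub_sub_cancel, hgeven]
  exact second_moment_inv_sqrt_odds (hG01 f).1 (hG01 f).2 (g f)

/-- for `φ ∈ L_G` (`φ' v = -q(v)^{-1/2}·g(v)`, `g` even nonnegative,
`q = G/(1-G)` the odds of a symmetric CDF `G`), the conditional second moment of
the estimating score under `Pr(y* = 1) = G f` equals the squared weight:
`G f·(φ'(f))² + (1 - G f)·(φ'(-f))² = g(f)²`, independent of `G`. -/
theorem stmt_11 (G g φ : ℝ → ℝ)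
    (hG01 : ∀ v, 0 < G v ∧ G v < 1)
    (hGsym : ∀ v, G v = 1 - G (-v))
    (hgeven : ∀ w, g (-w) = g w) (hgnn : ∀ w, 0 ≤ g w)
    (hφdiff : Differentiable ℝ φ)
    (hφ' : ∀ v, deriv φ v = -((Real.sqrt (G v / (1 - G v)))⁻¹ * g v)) :
    ∀ f : ℝ, G f * (deriv φ f) ^ 2 + (1 - G f) * (deriv φ (-f)) ^ 2 = (g f) ^ 2 :=
  stmt_11_general G g φ hG01 hGsym hgeven hφ'
end

section
/- Let G : ℝ → ℝ be differentiable with 0 < G(v) < 1 and G(v) = 1 − G(−v) for all v, let q(w) = G(w)/(1 − G(w)), and let g : ℝ → ℝ be differentiable, even, and nonnegative. Let φ : ℝ → ℝ be twice differentiable with φ′(v) = −q(v)^{−1/2}·g(v) for all v. Then for every f ∈ ℝ, the conditional sensitivity of the score under the model Pr(y* = 1) = G(f) satisfies G(f)·φ″(f) + (1 − G(f))·φ″(−f) = G′(f)·g(f)/√(G(f)·(1 − G(f))). -/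
/-! Symmetry of `G` inverts the odds, `q (-v) = (q v)⁻¹`, and with `g` even this turns
`φ' (-v)` into `-q(v)^{1/2} g(v)`. Differentiating both expressions for `φ'`, the `g'` terms
cancel since `G q^{-1/2} = (1 - G) q^{1/2} = √(G (1 - G))`, and only the contribution of
`q' = G' / (1 - G)²` survives. -/

open Real

lemma hasDerivAt_sqrt_odds {G : ℝ → ℝ} {G' x : ℝ} (hG : HasDerivAt G G' x)
    (h0 : 0 < G x) (h1 : G x < 1) :
    HasDerivAt (fun v ↦ √(G v / (1 - G v)))
      (G' / (2 * √(G x / (1 - G x)) * (1 - G x) ^ 2)) x := by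
  have h1' : 1 - G x ≠ 0 := by linarith
  refine ((hG.div (hG.const_sub 1) h1').sqrt (div_pos h0 (by linarith)).ne').congr_deriv ?_
  rw [Pi.div_apply]
  field_simp
  ring

lemma sqrt_odds_comp_neg {G : ℝ → ℝ} (hsym : ∀ v, G v = 1 - G (-v)) (v : ℝ) :
    √(G (-v) / (1 - G (-v))) = (√(G v / (1 - G v)))⁻¹ := by
  rw [← sqrt_inv, inv_div, hsym v, sub_sub_cancel]

lemma sensitivity_identity {a r' G' g g' : ℝ} (ha0 : 0 < a) (ha1 : a < 1)
    (hr' : r' = G' / (2 * √(a / (1 - a)) * (1 - a) ^ 2)) :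
    a * -(-r' / √(a / (1 - a)) ^ 2 * g + (√(a / (1 - a)))⁻¹ * g')
      + (1 - a) * (r' * g + √(a / (1 - a)) * g') = G' * g / √(a * (1 - a)) := by
  have hb : 0 < 1 - a := by linarith
  subst hr'
  rw [sqrt_div ha0.le, sqrt_mul ha0.le]
  have hc := sq_sqrt ha0.le
  have hd := sq_sqrt hb.le
  have hc0 := sqrt_pos.2 ha0
  have hd0 := sqrt_pos.2 hb
  field_simp
  rw [hc, hd]
  ring

theorem stmt_12_general (G g φ : ℝ → ℝ)
    (hGdiff : Differentiable ℝ G)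
    (hG01 : ∀ v, 0 < G v ∧ G v < 1)
    (hGsym : ∀ v, G v = 1 - G (-v))
    (hgdiff : Differentiable ℝ g)
    (hgeven : ∀ w, g (-w) = g w)
    (hφ' : ∀ v, deriv φ v = -((Real.sqrt (G v / (1 - G v)))⁻¹ * g v)) :
    ∀ f : ℝ,
      G f * deriv (deriv φ) f + (1 - G f) * deriv (deriv φ) (-f) =
        deriv G f * g f / Real.sqrt (G f * (1 - G f)) := by
  intro f
  obtain ⟨h0, h1⟩ := hG01 f
  have hr := hasDerivAt_sqrt_odds (hGdiff f).hasDerivAt h0 h1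
  have hr_ne : √(G f / (1 - G f)) ≠ 0 := (sqrt_pos.2 (div_pos h0 (by linarith))).ne'
  have hφ'_comp_neg : (fun v ↦ deriv φ (-v)) = fun v ↦ -(√(G v / (1 - G v)) * g v) := by
    funext v
    rw [hφ', sqrt_odds_comp_neg hGsym, inv_inv, hgeven]
  have hφ''_pos : deriv (deriv φ) f = -(-(deriv G f / (2 * √(G f / (1 - G f)) * (1 - G f) ^ 2))
      / √(G f / (1 - G f)) ^ 2 * g f + (√(G f / (1 - G f)))⁻¹ * deriv g f) := by
    rw [funext hφ']
    exact ((hr.inv hr_ne).mul (hgdiff f).hasDerivAt).neg.deriv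
  have hφ''_neg : deriv (deriv φ) (-f) = deriv G f / (2 * √(G f / (1 - G f)) * (1 - G f) ^ 2)
      * g f + √(G f / (1 - G f)) * deriv g f := by
    rw [← neg_neg (deriv _ (-f)), ← deriv_comp_neg, hφ'_comp_neg,
      deriv.fun_neg, neg_neg]
    exact (hr.mul (hgdiff f).hasDerivAt).deriv
  rw [hφ''_pos, hφ''_neg]
  exact sensitivity_identity h0 h1 rfl

/-- for a twice differentiable `φ ∈ L_G`
(`φ' v = -q(v)^{-1/2}·g(v)` with `g` differentiable, even, nonnegative,
`q = G/(1-G)` the odds of a differentiable symmetric CDF `G`), the conditional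
sensitivity of the score under `Pr(y* = 1) = G f` is
`G f·φ''(f) + (1 - G f)·φ''(-f) = G'(f)·g(f)/√(G f·(1 - G f))`. -/
theorem stmt_12 (G g φ : ℝ → ℝ)
    (hGdiff : Differentiable ℝ G)
    (hG01 : ∀ v, 0 < G v ∧ G v < 1)
    (hGsym : ∀ v, G v = 1 - G (-v))
    (hgdiff : Differentiable ℝ g)
    (hgeven : ∀ w, g (-w) = g w) (hgnn : ∀ w, 0 ≤ g w)
    (hφdiff : Differentiable ℝ φ)
    (hφ'diff : Differentiable ℝ (deriv φ))
    (hφ' : ∀ v, deriv φ v = -((Real.sqrt (G v / (1 - G v)))⁻¹ * g v)) :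
    ∀ f : ℝ,
      G f * deriv (deriv φ) f + (1 - G f) * deriv (deriv φ) (-f) =
        deriv G f * g f / Real.sqrt (G f * (1 - G f)) :=
  stmt_12_general G g φ hGdiff hG01 hGsym hgdiff hgeven hφ'
end

section
/- Let y* ∈ {−1, 1}, set y = (y* + 1)/2, let F(v) = (1 + e^{−v})^{−1}, and define S(f) = (y − F(f))/√(F(f)·(1 − F(f))) for f ∈ ℝ. Let v₁, …, v_M ∈ ℝ and v = v₁ + ⋯ + v_M. Then the standardized logistic regression residual partitions multiplicatively: S(v) = (y*)^{M+1} · ∏_{m=1}^{M} S(v_m), and in particular S(v)² = ∏_{m=1}^{M} S(v_m)². -/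
/-!
With `F = sigmoid` one has `1 - F(f) = F(-f) = e^{-f} F(f)`, so the logistic variance is
`F(f) (1 - F(f)) = (e^{-f/2} F(f))²` and the standardized residual collapses to
`S(f) = y* e^{-y* f / 2}`. The exponential turns the sum of the margins into a product, and
the surplus powers of `y*` are absorbed using `y*² = 1`.
-/

open Finset Real

namespace Real

lemma sigmoid_mul_one_sub_sigmoid (x : ℝ) :
    sigmoid x * (1 - sigmoid x) = (exp (-x / 2) * sigmoid x) ^ 2 := by
  have hexp : exp (-x / 2) ^ 2 = exp (-x) := by rw [← exp_nat_mul]; ring_nf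
  rw [← sigmoid_neg, ← sigmoid_mul_rexp_neg, mul_pow, hexp]
  ring

lemma sqrt_sigmoid_mul_one_sub_sigmoid (x : ℝ) :
    √(sigmoid x * (1 - sigmoid x)) = exp (-x / 2) * sigmoid x := by
  rw [sigmoid_mul_one_sub_sigmoid, sqrt_sq (by positivity [sigmoid_pos x])]

end Real

noncomputable def logisticResidual (ystar f : ℝ) : ℝ :=
  ((ystar + 1) / 2 - sigmoid f) / √(sigmoid f * (1 - sigmoid f))

lemma logisticResidual_eq {ystar : ℝ} (hy : ystar = -1 ∨ ystar = 1) (f : ℝ) :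
    logisticResidual ystar f = ystar * exp (-(ystar * f) / 2) := by
  have hsigmoid := (sigmoid_pos f).ne'
  rw [logisticResidual, sqrt_sigmoid_mul_one_sub_sigmoid]
  rcases hy with rfl | rfl
  · rw [show -(-1 * f) / 2 = -(-f / 2) by ring, exp_neg]
    field_simp
    ring
  · rw [show (1 + 1) / 2 - sigmoid f = sigmoid (-f) by rw [sigmoid_neg]; ring,
      ← sigmoid_mul_rexp_neg, show -f = -f / 2 + -f / 2 by ring, exp_add]
    field_simp
    ring_nf

lemma logisticResidual_sum {ι : Type*} {ystar : ℝ} (hy : ystar = -1 ∨ ystar = 1)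
    (s : Finset ι) (v : ι → ℝ) :
    logisticResidual ystar (∑ i ∈ s, v i) =
      ystar ^ (#s + 1) * ∏ i ∈ s, logisticResidual ystar (v i) := by
  have hy2 : ystar ^ 2 = 1 := by rcases hy with rfl | rfl <;> norm_num
  simp only [logisticResidual_eq hy, prod_mul_distrib, prod_const, ← exp_sum]
  have hexponent : -(ystar * ∑ i ∈ s, v i) / 2 = ∑ i ∈ s, -(ystar * v i) / 2 := by
    rw [mul_sum, ← sum_neg_distrib, sum_div]
  rw [hexponent]
  calc ystar * exp (∑ i ∈ s, -(ystar * v i) / 2)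
      = (ystar ^ 2) ^ #s * ystar * exp (∑ i ∈ s, -(ystar * v i) / 2) := by
        rw [hy2, one_pow, one_mul]
    _ = _ := by ring

lemma logisticResidual_sum_sq {ι : Type*} {ystar : ℝ} (hy : ystar = -1 ∨ ystar = 1)
    (s : Finset ι) (v : ι → ℝ) :
    logisticResidual ystar (∑ i ∈ s, v i) ^ 2 = ∏ i ∈ s, logisticResidual ystar (v i) ^ 2 := by
  have hy2 : ystar ^ 2 = 1 := by rcases hy with rfl | rfl <;> norm_num
  rw [logisticResidual_sum hy, mul_pow, ← pow_mul, mul_comm (#s + 1), pow_mul, hy2, one_pow,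
    one_mul, prod_pow]

/-- the standardized logistic regression residual partitions
multiplicatively over an additive decomposition of the margin:
`S(v₁ + ⋯ + v_M) = (y*)^{M+1} · ∏ₘ S(vₘ)` and `S(v₁ + ⋯ + v_M)² = ∏ₘ S(vₘ)²`. -/
theorem stmt_14 (ystar : ℝ) (hy : ystar = -1 ∨ ystar = 1)
    (M : ℕ) (v : Fin M → ℝ) :
    let y : ℝ := (ystar + 1) / 2
    let F : ℝ → ℝ := fun u => (1 + Real.exp (-u))⁻¹
    let S : ℝ → ℝ := fun f => (y - F f) / Real.sqrt (F f * (1 - F f))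
    S (∑ m, v m) = ystar ^ (M + 1) * ∏ m, S (v m) ∧
    (S (∑ m, v m)) ^ 2 = ∏ m, (S (v m)) ^ 2 := by
  intro y F S
  have hS : S = logisticResidual ystar := rfl
  rw [hS]
  refine ⟨?_, logisticResidual_sum_sq hy univ v⟩
  simpa using logisticResidual_sum hy univ v
end

section
/- Let (x₁, y₁*), …, (x_n, y_n*) be data with y_i* ∈ {−1, 1}, set y_i = (y_i* + 1)/2, let F(v) = (1 + e^{−v})^{−1}, and for a function f define S_i(f) = (y_i − F(f(x_i)))/√(F(f(x_i))·(1 − F(f(x_i)))). Then exp(−y_i*·f(x_i)) = S_i(f)² for every i, and hence the empirical exponential risk equals the mean of squared standardized logistic regression residuals: (1/n)·Σ_{i=1}^{n} exp(−y_i*·f(x_i)) = (1/n)·Σ_{i=1}^{n} S_i(f)². In particular, minimizing empirical exponential loss is equivalent to minimizing the sum of squared standardized logistic regression residuals. -/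
/-!
With `p = F(v)` the standardized residual satisfies `S² = (y - p)² / (p (1 - p))`, which is the
odds `(1 - p) / p = e^{-v}` when `y = 1` (i.e. `y* = 1`) and the inverse odds `p / (1 - p) = e^{v}`
when `y = 0` (i.e. `y* = -1`); in both cases this is `e^{-y* v}`.
-/

open Finset Real

section BernoulliResidual

variable {p : ℝ}

lemma sq_div_sqrt_mul_one_sub (hp₀ : 0 < p) (hp₁ : p < 1) (y : ℝ) :
    ((y - p) / √(p * (1 - p))) ^ 2 = (y - p) ^ 2 / (p * (1 - p)) := by
  rw [div_pow, sq_sqrt (mul_pos hp₀ (sub_pos.2 hp₁)).le]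

lemma sq_one_sub_div_sqrt_mul_one_sub (hp₀ : 0 < p) (hp₁ : p < 1) :
    ((1 - p) / √(p * (1 - p))) ^ 2 = (1 - p) / p := by
  have : 1 - p ≠ 0 := (sub_pos.2 hp₁).ne'
  rw [sq_div_sqrt_mul_one_sub hp₀ hp₁]
  field_simp

lemma sq_zero_sub_div_sqrt_mul_one_sub (hp₀ : 0 < p) (hp₁ : p < 1) :
    ((0 - p) / √(p * (1 - p))) ^ 2 = p / (1 - p) := by
  have : 1 - p ≠ 0 := (sub_pos.2 hp₁).ne'
  rw [sq_div_sqrt_mul_one_sub hp₀ hp₁]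
  field_simp
  ring

end BernoulliResidual

lemma one_sub_sigmoid_div_sigmoid (v : ℝ) : (1 - sigmoid v) / sigmoid v = exp (-v) := by
  rw [← sigmoid_neg, ← sigmoid_mul_rexp_neg, mul_div_cancel_left₀ _ (sigmoid_pos v).ne']

lemma sigmoid_div_one_sub_sigmoid (v : ℝ) : sigmoid v / (1 - sigmoid v) = exp v := by
  simpa [sigmoid_neg] using one_sub_sigmoid_div_sigmoid (-v)

lemma rexp_neg_mul_eq_sq_standardized_residual {b : ℝ} (hb : b = -1 ∨ b = 1) (v : ℝ) :
    exp (-(b * v)) = (((b + 1) / 2 - sigmoid v) / √(sigmoid v * (1 - sigmoid v))) ^ 2 := by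
  rcases hb with rfl | rfl
  · rw [neg_add_cancel, zero_div,
      sq_zero_sub_div_sqrt_mul_one_sub (sigmoid_pos v) (sigmoid_lt_one v),
      sigmoid_div_one_sub_sigmoid, neg_one_mul, neg_neg]
  · rw [one_add_one_eq_two, div_self two_ne_zero,
      sq_one_sub_div_sqrt_mul_one_sub (sigmoid_pos v) (sigmoid_lt_one v),
      one_sub_sigmoid_div_sigmoid, one_mul]

theorem stmt_16_general (X : Type*) (n : ℕ)
    (x : Fin n → X) (ystar : Fin n → ℝ)
    (hy : ∀ i, ystar i = -1 ∨ ystar i = 1) (f : X → ℝ) :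
    let y : Fin n → ℝ := fun i => (ystar i + 1) / 2
    let F : ℝ → ℝ := fun u => (1 + Real.exp (-u))⁻¹
    let S : Fin n → ℝ := fun i =>
      (y i - F (f (x i))) / Real.sqrt (F (f (x i)) * (1 - F (f (x i))))
    (∀ i, Real.exp (-(ystar i * f (x i))) = (S i) ^ 2) ∧
    (1 / (n : ℝ)) * ∑ i, Real.exp (-(ystar i * f (x i))) =
      (1 / (n : ℝ)) * ∑ i, (S i) ^ 2 := by
  intro y F S
  -- `F` is `Real.sigmoid` unfolded
  have h : ∀ i, Real.exp (-(ystar i * f (x i))) = (S i) ^ 2 := fun i =>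
    rexp_neg_mul_eq_sq_standardized_residual (hy i) (f (x i))
  exact ⟨h, congrArg _ (sum_congr rfl fun i _ => h i)⟩

/-- for data `(xᵢ, yᵢ*)` with `yᵢ* ∈ {-1,1}` and standardized
logistic regression residuals `Sᵢ(f) = (yᵢ - F(f xᵢ))/√(F(f xᵢ)(1 - F(f xᵢ)))`,
one has `exp(-yᵢ*·f(xᵢ)) = Sᵢ(f)²` for every `i`, and hence the empirical
exponential risk equals the mean of squared residuals. -/
theorem stmt_16 (X : Type*) (n : ℕ) (hn : 0 < n)
    (x : Fin n → X) (ystar : Fin n → ℝ)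
    (hy : ∀ i, ystar i = -1 ∨ ystar i = 1) (f : X → ℝ) :
    let y : Fin n → ℝ := fun i => (ystar i + 1) / 2
    let F : ℝ → ℝ := fun u => (1 + Real.exp (-u))⁻¹
    let S : Fin n → ℝ := fun i =>
      (y i - F (f (x i))) / Real.sqrt (F (f (x i)) * (1 - F (f (x i))))
    (∀ i, Real.exp (-(ystar i * f (x i))) = (S i) ^ 2) ∧
    (1 / (n : ℝ)) * ∑ i, Real.exp (-(ystar i * f (x i))) =
      (1 / (n : ℝ)) * ∑ i, (S i) ^ 2 :=
  stmt_16_general X n x ystar hy f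
end

section
/- Let X be a type, let (x₁, y₁*), …, (x_n, y_n*) be data with x_i ∈ X and y_i* ∈ {−1, 1}, and let 𝓕 be a set of functions X → ℝ closed under multiplication by positive scalars. For p > 0 define the p-norm objective L_p(f) = Σ_{i=1}^{n} exp(−y_i*·f(x_i)·p/2), which equals Σ_i |S_i(f)|^p for the standardized logistic regression residuals S_i(f). Then for any p, l > 0: (i) f̂ minimizes L_l over 𝓕 if and only if (l/p)·f̂ minimizes L_p over 𝓕 (so minimizers satisfy f̂_p = (l/p)·f̂_l); and (ii) the infimum of L_p over 𝓕 does not depend on p. Consequently the induced classifier sign(f̂_p(x)) is the same for all p. -/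
/-! Rescaling `f` by `c > 0` multiplies every margin `yᵢ* f(xᵢ)` by `c`, so `L_p (c • f) = L_{c p} f`.
Since `𝓕` is a cone, `f ↦ (l / p) • f` maps `𝓕` onto itself and carries `L_l` to `L_p`: the two
objectives take the same set of values on `𝓕`, and minimizers correspond under the rescaling. -/

section ScalingObjective

variable {X : Type*} {s : Set (X → ℝ)} {L : ℝ → (X → ℝ) → ℝ}

lemma scaling_objective_div_smul (hL : ∀ c : ℝ, 0 < c → ∀ p f, L p (c • f) = L (c * p) f)
    {p l : ℝ} (hp : 0 < p) (hl : 0 < l) (f : X → ℝ) :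
    L p ((l / p) • f) = L l f := by
  rw [hL _ (div_pos hl hp), div_mul_cancel₀ l hp.ne']

lemma scaling_objective_image_eq (hs : ∀ c : ℝ, 0 < c → ∀ f ∈ s, c • f ∈ s)
    (hL : ∀ c : ℝ, 0 < c → ∀ p f, L p (c • f) = L (c * p) f)
    {p l : ℝ} (hp : 0 < p) (hl : 0 < l) :
    L p '' s = L l '' s := by
  have image_subset : ∀ {p l : ℝ}, 0 < p → 0 < l → L l '' s ⊆ L p '' s := by
    rintro p l hp hl _ ⟨f, hf, rfl⟩
    exact ⟨(l / p) • f, hs (l / p) (div_pos hl hp) f hf, scaling_objective_div_smul hL hp hl f⟩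
  exact (image_subset hl hp).antisymm (image_subset hp hl)

lemma scaling_objective_isMinOn_iff (hs : ∀ c : ℝ, 0 < c → ∀ f ∈ s, c • f ∈ s)
    (hL : ∀ c : ℝ, 0 < c → ∀ p f, L p (c • f) = L (c * p) f)
    {p l : ℝ} (hp : 0 < p) (hl : 0 < l) (f : X → ℝ) :
    IsMinOn (L l) s f ↔ IsMinOn (L p) s ((l / p) • f) := by
  simp only [isMinOn_iff, ← Set.forall_mem_image (f := L l), ← Set.forall_mem_image (f := L p),
    scaling_objective_image_eq hs hL hp hl, scaling_objective_div_smul hL hp hl]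

end ScalingObjective

noncomputable def expLoss {X : Type*} {n : ℕ} (x : Fin n → X) (y : Fin n → ℝ) (p : ℝ)
    (f : X → ℝ) : ℝ :=
  ∑ i, Real.exp (-(y i * f (x i)) * p / 2)

lemma expLoss_smul {X : Type*} {n : ℕ} (x : Fin n → X) (y : Fin n → ℝ) (c p : ℝ) (f : X → ℝ) :
    expLoss x y p (c • f) = expLoss x y (c * p) f := by
  simp only [expLoss, Pi.smul_apply, smul_eq_mul]
  congr! 2
  ring

lemma Real.sign_mul_of_pos {c : ℝ} (hc : 0 < c) (r : ℝ) : Real.sign (c * r) = Real.sign r := by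
  rcases lt_trichotomy r 0 with h | rfl | h
  · rw [Real.sign_of_neg h, Real.sign_of_neg (mul_neg_of_pos_of_neg hc h)]
  · rw [mul_zero]
  · rw [Real.sign_of_pos h, Real.sign_of_pos (mul_pos hc h)]

theorem stmt_17_general (X : Type*) (n : ℕ) (x : Fin n → X) (ystar : Fin n → ℝ)
    (𝓕 : Set (X → ℝ))
    (hclosed : ∀ c : ℝ, 0 < c → ∀ f ∈ 𝓕, (fun a => c * f a) ∈ 𝓕) :
    let L : ℝ → (X → ℝ) → ℝ :=
      fun p f => ∑ i, Real.exp (-(ystar i * f (x i)) * p / 2)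
    (∀ p l : ℝ, 0 < p → 0 < l → ∀ f ∈ 𝓕,
      ((∀ f' ∈ 𝓕, L l f ≤ L l f') ↔
        ((fun a => (l / p) * f a) ∈ 𝓕 ∧
          ∀ f' ∈ 𝓕, L p (fun a => (l / p) * f a) ≤ L p f'))) ∧
    (∀ p l : ℝ, 0 < p → 0 < l →
      sInf ((fun f => L p f) '' 𝓕) = sInf ((fun f => L l f) '' 𝓕)) ∧
    (∀ p l : ℝ, 0 < p → 0 < l → ∀ f ∈ 𝓕, ∀ a : X,
      Real.sign ((l / p) * f a) = Real.sign (f a)) := by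
  intro L
  have hs : ∀ c : ℝ, 0 < c → ∀ f ∈ 𝓕, c • f ∈ 𝓕 := hclosed
  have hL : ∀ c : ℝ, 0 < c → ∀ p f, L p (c • f) = L (c * p) f :=
    fun c _ p f => expLoss_smul x ystar c p f
  refine ⟨fun p l hp hl f hf => ?_, fun p l hp hl => ?_,
    fun p l hp hl f _ a => Real.sign_mul_of_pos (div_pos hl hp) (f a)⟩
  · rw [and_iff_right (hclosed _ (div_pos hl hp) f hf)]
    exact scaling_objective_isMinOn_iff hs hL hp hl f
  · rw [scaling_objective_image_eq hs hL hp hl]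

/-- for the p-norm objective
`L_p f = Σᵢ exp(-yᵢ*·f(xᵢ)·p/2) = Σᵢ |Sᵢ(f)|^p` over a class `𝓕` closed under
positive scaling: (i) `f` minimizes `L_l` over `𝓕` iff `(l/p)·f` minimizes `L_p`
over `𝓕`; (ii) the infimum of `L_p` over `𝓕` does not depend on `p`; and
consequently the induced classifier `sign(f̂_p(x))` is the same for all `p`. -/
theorem stmt_17 (X : Type*) (n : ℕ) (x : Fin n → X) (ystar : Fin n → ℝ)
    (hy : ∀ i, ystar i = -1 ∨ ystar i = 1)
    (𝓕 : Set (X → ℝ))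
    (hclosed : ∀ c : ℝ, 0 < c → ∀ f ∈ 𝓕, (fun a => c * f a) ∈ 𝓕) :
    let L : ℝ → (X → ℝ) → ℝ :=
      fun p f => ∑ i, Real.exp (-(ystar i * f (x i)) * p / 2)
    (∀ p l : ℝ, 0 < p → 0 < l → ∀ f ∈ 𝓕,
      ((∀ f' ∈ 𝓕, L l f ≤ L l f') ↔
        ((fun a => (l / p) * f a) ∈ 𝓕 ∧
          ∀ f' ∈ 𝓕, L p (fun a => (l / p) * f a) ≤ L p f'))) ∧
    (∀ p l : ℝ, 0 < p → 0 < l →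
      sInf ((fun f => L p f) '' 𝓕) = sInf ((fun f => L l f) '' 𝓕)) ∧
    (∀ p l : ℝ, 0 < p → 0 < l → ∀ f ∈ 𝓕, ∀ a : X,
      Real.sign ((l / p) * f a) = Real.sign (f a)) :=
  stmt_17_general X n x ystar 𝓕 hclosed
end
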